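/- arXiv:1608.00925 — 6 statements merged into one kernel-verified Lean document; each statement's English description precedes it below -/
import Mathlib

section
/- (Proposition 1, primary problem) Let P be a continuous probability density on [0,∞) with finite mean μ > 0, finite second moment, and ∫_x^∞ P(ψ) dψ > 0 for every x ≥ 0. Then for every energy budget E_max_exp ≥ μ·g_e, the constrained problem of minimizing E_var(c_e) over {c_e ≥ 0 : E_exp(c_e) ≤ E_max_exp} has a unique minimizer c_e*, and this minimizer satisfies E_exp(c_e*) = E_max_exp. -/
open MeasureTheory Set

/-- Expected energy consumption `E_exp(c) = μ·g_e + i_e·∫₀^{c·μ} (c·μ − ψ) P(ψ) dψ`. -/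
noncomputable def Eexp (P : ℝ → ℝ) (g_e i_e μ c : ℝ) : ℝ :=
  μ * g_e + i_e * ∫ ψ in (0:ℝ)..(c * μ), (c * μ - ψ) * P ψ

/-- One-sided energy variation `E_var(c) = g_e²·∫_{c·μ}^∞ (ψ − c·μ)² P(ψ) dψ`. -/
noncomputable def Evar (P : ℝ → ℝ) (g_e μ c : ℝ) : ℝ :=
  g_e ^ 2 * ∫ ψ in Ioi (c * μ), (ψ - c * μ) ^ 2 * P ψ

/-!
The energy `E_exp(c)` is continuous in `c` and tends to `∞` (the idle term grows at least
linearly once the threshold passes some mass of `P`), while `E_var(c)` is strictly decreasing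
because every upper tail of `P` carries mass. Hence the feasible set is a compact set
containing `0`, its largest point is the unique minimizer of `E_var`, and by the intermediate
value theorem the budget is exhausted there.
-/

open Filter

theorem exists_unique_minimizer_of_strictAntiOn {F V : ℝ → ℝ} {E : ℝ} (hF : Continuous F)
    (hF_zero : F 0 ≤ E) (hF_top : Tendsto F atTop atTop)
    (hV : StrictAntiOn V (Ici 0)) :
    ∃ cstar : ℝ,
      (0 ≤ cstar ∧ F cstar ≤ E ∧ ∀ c : ℝ, 0 ≤ c → F c ≤ E → V cstar ≤ V c) ∧
      (∀ c : ℝ, (0 ≤ c ∧ F c ≤ E ∧ ∀ c' : ℝ, 0 ≤ c' → F c' ≤ E → V c ≤ V c') → c = cstar) ∧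
      F cstar = E := by
  obtain ⟨c₀, hc₀⟩ := eventually_atTop.1 (hF_top.eventually_gt_atTop E)
  set S : Set ℝ := {c | 0 ≤ c ∧ F c ≤ E}
  have hS_sub : S ⊆ Icc 0 c₀ := fun c hc => ⟨hc.1, not_lt.1 fun h => (hc₀ c h.le).not_ge hc.2⟩
  have hS_closed : IsClosed S := isClosed_Ici.inter (isClosed_le hF continuous_const)
  obtain ⟨cstar, ⟨hcstar_nonneg, hcstar_le⟩, hcstar_max⟩ :=
    (isCompact_Icc.of_isClosed_subset hS_closed hS_sub).exists_isGreatest ⟨0, le_rfl, hF_zero⟩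
  have hcstar_lt : cstar < c₀ := not_le.1 fun h => (hc₀ cstar h).not_ge hcstar_le
  have hV_le : ∀ c ∈ S, V cstar ≤ V c := fun c hc =>
    hV.antitoneOn hc.1 hcstar_nonneg (hcstar_max hc)
  refine ⟨cstar, ⟨hcstar_nonneg, hcstar_le, fun c hc hFc => hV_le c ⟨hc, hFc⟩⟩, ?_, ?_⟩
  · rintro c ⟨hc, hFc, hmin⟩
    exact le_antisymm (hcstar_max ⟨hc, hFc⟩)
      ((hV.le_iff_ge hc hcstar_nonneg).1 (hmin cstar hcstar_nonneg hcstar_le))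
  · obtain ⟨c, hc, hFc⟩ := intermediate_value_Icc hcstar_lt.le hF.continuousOn
      ⟨hcstar_le, (hc₀ c₀ le_rfl).le⟩
    have hc_mem : c ∈ S := ⟨hcstar_nonneg.trans hc.1, hFc.le⟩
    rwa [le_antisymm (hcstar_max hc_mem) hc.1] at hFc

theorem exists_pos_of_setIntegral_pos {X : Type*} [MeasurableSpace X] {μ : Measure X}
    {f : X → ℝ} {s : Set X} (hs : MeasurableSet s) (h : 0 < ∫ x in s, f x ∂μ) :
    ∃ x ∈ s, 0 < f x := by
  by_contra! hf
  exact (setIntegral_nonpos hs hf).not_gt h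

theorem setIntegral_pos_of_continuous {X : Type*} [TopologicalSpace X] [MeasurableSpace X]
    [OpensMeasurableSpace X] {μ : Measure X} [μ.IsOpenPosMeasure] {f : X → ℝ} {s : Set X}
    (hs : IsOpen s) (hf : Continuous f) (hfi : IntegrableOn f s μ)
    (hf_nonneg : ∀ x ∈ s, 0 ≤ f x) {x : X} (hx : x ∈ s)
    (hfx : 0 < f x) : 0 < ∫ y in s, f y ∂μ := by
  rw [setIntegral_pos_iff_support_of_nonneg_ae
    (ae_restrict_of_forall_mem hs.measurableSet hf_nonneg) hfi]
  exact (hf.isOpen_support.inter hs).measure_pos μ ⟨x, hfx.ne', hx⟩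

section PartialMoments

variable {P : ℝ → ℝ}

/-- `𝔼[(t - X)⁺]` for `X` with density `P` supported on `[0, ∞)`. -/
noncomputable def lowerPartialMoment (P : ℝ → ℝ) (t : ℝ) : ℝ :=
  ∫ ψ in (0:ℝ)..t, (t - ψ) * P ψ

/-- `𝔼[((X - t)⁺)²]` for `X` with density `P`. -/
noncomputable def upperPartialMoment (P : ℝ → ℝ) (t : ℝ) : ℝ :=
  ∫ ψ in Ioi t, (ψ - t) ^ 2 * P ψ

theorem continuous_lowerPartialMoment (hP : Continuous P) :
    Continuous (lowerPartialMoment P) :=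
  intervalIntegral.continuous_parametric_intervalIntegral_of_continuous (by fun_prop)
    continuous_id

theorem tendsto_lowerPartialMoment_atTop (hP : Continuous P) (hP_nonneg : ∀ x, 0 ≤ P x)
    (htail : 0 < ∫ ψ in Ioi 0, P ψ) :
    Tendsto (lowerPartialMoment P) atTop atTop := by
  obtain ⟨ψ₀, hψ₀ : 0 < ψ₀, hPψ₀⟩ := exists_pos_of_setIntegral_pos measurableSet_Ioi htail
  set a := ψ₀ + 1 with ha_def
  have ha : 0 < a := by linarith
  have hmass : 0 < ∫ ψ in (0:ℝ)..a, P ψ :=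
    intervalIntegral.integral_pos ha hP.continuousOn (fun x _ => hP_nonneg x)
      ⟨ψ₀, ⟨hψ₀.le, by linarith⟩, hPψ₀⟩
  have hlinear : ∀ t, a ≤ t → (t - a) * ∫ ψ in (0:ℝ)..a, P ψ ≤ lowerPartialMoment P t := by
    intro t hat
    have hint : ∀ b c : ℝ, IntervalIntegrable (fun ψ => (t - ψ) * P ψ) volume b c :=
      fun b c => (Continuous.intervalIntegrable (by fun_prop) b c)
    calc (t - a) * ∫ ψ in (0:ℝ)..a, P ψ
        = ∫ ψ in (0:ℝ)..a, (t - a) * P ψ := (intervalIntegral.integral_const_mul _ _).symm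
      _ ≤ ∫ ψ in (0:ℝ)..a, (t - ψ) * P ψ :=
          intervalIntegral.integral_mono_on ha.le (hP.intervalIntegrable _ _ |>.const_mul _)
            (hint _ _) fun ψ hψ => mul_le_mul_of_nonneg_right (by linarith [hψ.2]) (hP_nonneg ψ)
      _ ≤ ∫ ψ in (0:ℝ)..t, (t - ψ) * P ψ :=
          intervalIntegral.integral_mono_interval le_rfl ha.le hat
            (ae_restrict_of_forall_mem measurableSet_Ioc fun ψ hψ =>
              mul_nonneg (by linarith [hψ.2]) (hP_nonneg ψ))
            (hint _ _)
  refine tendsto_atTop_mono' _ (eventually_atTop.2 ⟨a, hlinear⟩) ?_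
  exact (tendsto_atTop_add_const_right _ (-a) tendsto_id).atTop_mul_const hmass

theorem integrableOn_sub_sq_mul (hP : Continuous P) (hP_nonneg : ∀ x, 0 ≤ P x)
    (hm2 : IntegrableOn (fun x => x ^ 2 * P x) (Ioi 0)) {t : ℝ}
    (ht : 0 ≤ t) : IntegrableOn (fun ψ => (ψ - t) ^ 2 * P ψ) (Ioi t) := by
  refine Integrable.mono' (hm2.mono_set (Ioi_subset_Ioi ht))
    (Continuous.aestronglyMeasurable (by fun_prop)) ?_
  refine ae_restrict_of_forall_mem measurableSet_Ioi fun ψ (hψ : t < ψ) => ?_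
  rw [Real.norm_of_nonneg (mul_nonneg (sq_nonneg _) (hP_nonneg ψ))]
  gcongr
  all_goals linarith [hP_nonneg ψ]

theorem upperPartialMoment_strictAntiOn (hP : Continuous P) (hP_nonneg : ∀ x, 0 ≤ P x)
    (hm2 : IntegrableOn (fun x => x ^ 2 * P x) (Ioi 0))
    (htail : ∀ x : ℝ, 0 ≤ x → 0 < ∫ ψ in Ioi x, P ψ) :
    StrictAntiOn (upperPartialMoment P) (Ici 0) := by
  intro t₁ (ht₁ : 0 ≤ t₁) t₂ (ht₂ : 0 ≤ t₂) h12
  have hi₁ := integrableOn_sub_sq_mul hP hP_nonneg hm2 ht₁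
  have hi₂ := integrableOn_sub_sq_mul hP hP_nonneg hm2 ht₂
  have hi₁' := hi₁.mono_set (Ioi_subset_Ioi h12.le)
  -- On `(t₂, ∞)` the integrand for `t₁` dominates, strictly wherever `P > 0`.
  have hgap : 0 < ∫ ψ in Ioi t₂, ((ψ - t₁) ^ 2 * P ψ - (ψ - t₂) ^ 2 * P ψ) := by
    obtain ⟨ψ₀, hψ₀ : t₂ < ψ₀, hPψ₀⟩ :=
      exists_pos_of_setIntegral_pos measurableSet_Ioi (htail t₂ ht₂)
    refine setIntegral_pos_of_continuous isOpen_Ioi (by fun_prop) (hi₁'.sub hi₂)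
      (fun ψ (hψ : t₂ < ψ) => ?_) hψ₀ ?_
    · rw [← sub_mul]
      exact mul_nonneg (by nlinarith) (hP_nonneg ψ)
    · rw [← sub_mul]
      exact mul_pos (by nlinarith) hPψ₀
  rw [integral_sub hi₁' hi₂] at hgap
  have hshrink : ∫ ψ in Ioi t₂, (ψ - t₁) ^ 2 * P ψ ≤ ∫ ψ in Ioi t₁, (ψ - t₁) ^ 2 * P ψ :=
    setIntegral_mono_set hi₁
      (ae_restrict_of_forall_mem measurableSet_Ioi fun ψ _ =>
        mul_nonneg (sq_nonneg _) (hP_nonneg ψ))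
      (Ioi_subset_Ioi h12.le).eventuallyLE
  unfold upperPartialMoment
  linarith

end PartialMoments

theorem stmt_3_general (P : ℝ → ℝ) (g_e i_e μ E_max_exp : ℝ)
    (hg : 0 < g_e) (hi : 0 < i_e)
    (hP_cont : Continuous P)
    (hP_nonneg : ∀ x, 0 ≤ P x)
    (hμ_pos : 0 < μ)
    (hm2_int : IntegrableOn (fun x => x ^ 2 * P x) (Ioi 0))
    (htail : ∀ x : ℝ, 0 ≤ x → 0 < ∫ ψ in Ioi x, P ψ)
    (hEmax : μ * g_e ≤ E_max_exp) :
    ∃ cstar : ℝ,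
      (0 ≤ cstar ∧ Eexp P g_e i_e μ cstar ≤ E_max_exp ∧
        ∀ c : ℝ, 0 ≤ c → Eexp P g_e i_e μ c ≤ E_max_exp →
          Evar P g_e μ cstar ≤ Evar P g_e μ c) ∧
      (∀ c : ℝ,
        (0 ≤ c ∧ Eexp P g_e i_e μ c ≤ E_max_exp ∧
          ∀ c' : ℝ, 0 ≤ c' → Eexp P g_e i_e μ c' ≤ E_max_exp →
            Evar P g_e μ c ≤ Evar P g_e μ c') → c = cstar) ∧
      Eexp P g_e i_e μ cstar = E_max_exp := by
  apply exists_unique_minimizer_of_strictAntiOn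
  · exact continuous_const.add <| continuous_const.mul <|
      (continuous_lowerPartialMoment hP_cont).comp (continuous_mul_const μ)
  · simpa [Eexp] using hEmax
  · exact tendsto_atTop_add_const_left _ _ <| Tendsto.const_mul_atTop hi <|
      (tendsto_lowerPartialMoment_atTop hP_cont hP_nonneg (htail 0 le_rfl)).comp
        (tendsto_id.atTop_mul_const hμ_pos)
  · intro c₁ (hc₁ : 0 ≤ c₁) c₂ (hc₂ : 0 ≤ c₂) h12
    have hV := upperPartialMoment_strictAntiOn hP_cont hP_nonneg hm2_int htail
      (mem_Ici.2 (mul_nonneg hc₁ hμ_pos.le)) (mem_Ici.2 (mul_nonneg hc₂ hμ_pos.le))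
      (mul_lt_mul_of_pos_right h12 hμ_pos)
    exact mul_lt_mul_of_pos_left hV (by positivity)

/-- (Proposition 1, primary problem) For a continuous density `P` on `[0,∞)` with finite
mean `μ > 0`, finite second moment and positive upper tails, for every energy budget
`E_max_exp ≥ μ·g_e` the problem of minimizing `E_var` over
`{c_e ≥ 0 : E_exp(c_e) ≤ E_max_exp}` has a unique minimizer, which moreover satisfies
`E_exp(c_e*) = E_max_exp`. -/
theorem stmt_3 (P : ℝ → ℝ) (g_e i_e μ E_max_exp : ℝ)
    (hg : 0 < g_e) (hi : 0 < i_e)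
    (hP_cont : Continuous P)
    (hP_nonneg : ∀ x, 0 ≤ P x)
    (hP_supp : ∀ x, x < 0 → P x = 0)
    (hP_int : IntegrableOn P (Ioi 0))
    (hP_norm : (∫ x in Ioi (0:ℝ), P x) = 1)
    (hmean_int : IntegrableOn (fun x => x * P x) (Ioi 0))
    (hμ : μ = ∫ x in Ioi (0:ℝ), x * P x)
    (hμ_pos : 0 < μ)
    (hm2_int : IntegrableOn (fun x => x ^ 2 * P x) (Ioi 0))
    (htail : ∀ x : ℝ, 0 ≤ x → 0 < ∫ ψ in Ioi x, P ψ)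
    (hEmax : μ * g_e ≤ E_max_exp) :
    ∃ cstar : ℝ,
      (0 ≤ cstar ∧ Eexp P g_e i_e μ cstar ≤ E_max_exp ∧
        ∀ c : ℝ, 0 ≤ c → Eexp P g_e i_e μ c ≤ E_max_exp →
          Evar P g_e μ cstar ≤ Evar P g_e μ c) ∧
      (∀ c : ℝ,
        (0 ≤ c ∧ Eexp P g_e i_e μ c ≤ E_max_exp ∧
          ∀ c' : ℝ, 0 ≤ c' → Eexp P g_e i_e μ c' ≤ E_max_exp →
            Evar P g_e μ c ≤ Evar P g_e μ c') → c = cstar) ∧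
      Eexp P g_e i_e μ cstar = E_max_exp :=
  stmt_3_general P g_e i_e μ E_max_exp hg hi hP_cont hP_nonneg hμ_pos hm2_int htail hEmax
end

section
/- Let P be the uniform probability density on [0, 2r] with r > 0 (mean μ = r), and suppose the energy budget satisfies g_e·r < E_max_exp < (g_e + i_e)·r. Then c_e = 2·√((E_max_exp − g_e·r)/(i_e·r)) lies in the interval (0, 2), and it is the unique value of c_e in [0, 2] for which E_exp(c_e) = E_max_exp. -/
open MeasureTheory Set

lemma key_integral (r a : ℝ) (hr : 0 < r) (ha : 0 ≤ a) (ha2 : a ≤ 2 * r) :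
    (∫ ψ in (0:ℝ)..a, (a - ψ) * (if 0 ≤ ψ ∧ ψ ≤ 2 * r then 1 / (2 * r) else 0))
      = a ^ 2 / (4 * r) := by
  rw [intervalIntegral.integral_congr (g := fun ψ => (a - ψ) * (1 / (2 * r)))]
  · rw [intervalIntegral.integral_mul_const, intervalIntegral.integral_sub
      intervalIntegrable_const (intervalIntegral.intervalIntegrable_id),
      intervalIntegral.integral_const, integral_id]
    field_simp
    ring
  · intro ψ hψ
    rw [uIcc_of_le ha] at hψ
    have h1 : 0 ≤ ψ := hψ.1
    have h2 : ψ ≤ 2 * r := le_trans hψ.2 ha2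
    simp [h1, h2]

lemma Eexp_eval (r g_e i_e c : ℝ) (hr : 0 < r) (hc : 0 ≤ c) (hc2 : c ≤ 2) :
    Eexp (fun ψ => if 0 ≤ ψ ∧ ψ ≤ 2 * r then 1 / (2 * r) else 0) g_e i_e r c
      = r * g_e + i_e * r * c ^ 2 / 4 := by
  have h1 : 0 ≤ c * r := mul_nonneg hc hr.le
  have h2 : c * r ≤ 2 * r := by nlinarith
  rw [Eexp, key_integral r (c * r) hr h1 h2]
  field_simp

/-- For the uniform density on `[0, 2r]` (mean `μ = r`), if
`g_e·r < E_max_exp < (g_e + i_e)·r`, then `c_e = 2·√((E_max_exp − g_e·r)/(i_e·r))` lies in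
`(0, 2)` and is the unique value in `[0, 2]` with `E_exp(c_e) = E_max_exp`. -/
theorem stmt_8 (r g_e i_e E_max_exp : ℝ) (hr : 0 < r) (hg : 0 < g_e) (hi : 0 < i_e)
    (hlo : g_e * r < E_max_exp) (hhi : E_max_exp < (g_e + i_e) * r) :
    (0 < 2 * Real.sqrt ((E_max_exp - g_e * r) / (i_e * r)) ∧
      2 * Real.sqrt ((E_max_exp - g_e * r) / (i_e * r)) < 2) ∧
    Eexp (fun ψ => if 0 ≤ ψ ∧ ψ ≤ 2 * r then 1 / (2 * r) else 0) g_e i_e r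
      (2 * Real.sqrt ((E_max_exp - g_e * r) / (i_e * r))) = E_max_exp ∧
    (∀ c : ℝ, 0 ≤ c → c ≤ 2 →
      Eexp (fun ψ => if 0 ≤ ψ ∧ ψ ≤ 2 * r then 1 / (2 * r) else 0) g_e i_e r c
        = E_max_exp →
      c = 2 * Real.sqrt ((E_max_exp - g_e * r) / (i_e * r))) := by
  set x : ℝ := (E_max_exp - g_e * r) / (i_e * r) with hx
  have hir : 0 < i_e * r := mul_pos hi hr
  have hxpos : 0 < x := div_pos (by linarith) hir
  have hxlt : x < 1 := by
    rw [div_lt_one hir]; nlinarith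
  have hsq : Real.sqrt x ^ 2 = x := Real.sq_sqrt hxpos.le
  have hs_pos : 0 < Real.sqrt x := Real.sqrt_pos.mpr hxpos
  have hs_lt : Real.sqrt x < 1 := by
    rw [show (1:ℝ) = Real.sqrt 1 by simp]
    exact Real.sqrt_lt_sqrt hxpos.le hxlt
  have hce0 : 0 < 2 * Real.sqrt x := by linarith
  have hce2 : 2 * Real.sqrt x < 2 := by linarith
  refine ⟨⟨hce0, hce2⟩, ?_, ?_⟩
  · rw [Eexp_eval r g_e i_e _ hr hce0.le hce2.le]
    have h4 : (2 * Real.sqrt x) ^ 2 = 4 * x := by rw [mul_pow, hsq]; ring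
    rw [h4, hx]
    field_simp
    ring
  · intro c hc hc2 heq
    rw [Eexp_eval r g_e i_e c hr hc hc2] at heq
    have hceq : c ^ 2 = 4 * x := by
      rw [hx]
      field_simp
      nlinarith
    have h4 : Real.sqrt (4 * x) = 2 * Real.sqrt x := by
      rw [show (4:ℝ) * x = (2 * Real.sqrt x) ^ 2 by rw [mul_pow, hsq]; ring]
      exact Real.sqrt_sq hce0.le
    calc c = Real.sqrt (c ^ 2) := (Real.sqrt_sq hc).symm
      _ = Real.sqrt (4 * x) := by rw [hceq]
      _ = 2 * Real.sqrt x := h4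
end

section
/- (Proposition 2, expected energy) Let α > 2, r > 0, and set v = (α − 1)·r/α. Let P be the Pareto probability density P(ψ) = α·v^α/ψ^{α+1} for ψ ≥ v and P(ψ) = 0 otherwise (so the mean is μ = r). Then for every c_e ≥ (α − 1)/α, the expected energy consumption satisfies E_exp(c_e) = [g_e + i_e·((α − 1)^{α−1}·c_e·(α·c_e)^{−α} + c_e − 1)]·r. -/
open MeasureTheory Set

/-- The Pareto density with scale `v > 0` and shape `α`. -/
noncomputable def paretoPDF (α v : ℝ) : ℝ → ℝ :=
  fun ψ => if v ≤ ψ then α * v ^ α / ψ ^ (α + 1) else 0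

/-!
The Pareto density vanishes below its scale `v`, so the integral runs over `[v, c r]` only, where
`(c r − ψ) α v^α ψ^(−α−1)` is a combination of two powers of `ψ`. Integrating them gives
`c r − α v/(α − 1) + v^α (c r)^(1−α)/(α − 1)`: the Pareto mean `α v/(α − 1)` equals `r` for
`v = (α − 1) r/α`, and the tail term rescales to `(α − 1)^(α−1) c (α c)^(−α) r`.
-/

open Real Filter

theorem integral_indicator_Ici_of_mem_Icc {μ : Measure ℝ} [NullSingletonClass μ] {f : ℝ → ℝ}
    {a v b : ℝ} (h : v ∈ Icc a b) :
    ∫ x in a..b, (Ici v).indicator f x ∂μ = ∫ x in v..b, f x ∂μ := by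
  rw [intervalIntegral.integral_of_le (h.1.trans h.2), intervalIntegral.integral_of_le h.2,
    integral_indicator measurableSet_Ici, Measure.restrict_restrict measurableSet_Ici,
    ← setIntegral_congr_set (Ioi_ae_eq_Ici.inter (EventuallyEq.rfl (f := Ioc a b))), inter_comm,
    Ioc_inter_Ioi, sup_eq_right.2 h.1]

theorem sub_mul_paretoPDF_eq_indicator {α v : ℝ} (hv : 0 < v) (b : ℝ) :
    (fun ψ => (b - ψ) * paretoPDF α v ψ)
      = (Ici v).indicator (fun ψ => α * v ^ α * (b * ψ ^ (-α - 1) - ψ ^ (-α))) := by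
  funext ψ
  by_cases hψ : v ≤ ψ
  · have hψ0 : 0 < ψ := hv.trans_le hψ
    have hpow : ψ ^ (-α) = ψ * ψ ^ (-α - 1) := by
      have h := rpow_add hψ0 1 (-α - 1)
      rwa [rpow_one, add_sub_cancel] at h
    simp only [paretoPDF, indicator_of_mem (mem_Ici.2 hψ), if_pos hψ]
    rw [hpow, show -α - 1 = -(α + 1) by ring, rpow_neg hψ0.le]
    ring
  · simp [paretoPDF, hψ]

/-- `v ^ α * b ^ (1 - α) / (α - 1)` is the Pareto tail expectation `E[(X - b)⁺]`. -/
theorem integral_sub_mul_paretoPDF {α v b : ℝ} (hα0 : α ≠ 0) (hα1 : α ≠ 1) (hv : 0 < v)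
    (hvb : v ≤ b) :
    ∫ ψ in 0..b, (b - ψ) * paretoPDF α v ψ
      = b - α * v / (α - 1) + v ^ α * b ^ (1 - α) / (α - 1) := by
  have hb : 0 < b := hv.trans_le hvb
  have h0 : (0 : ℝ) ∉ uIcc v b := by
    rw [uIcc_of_le hvb]; exact fun h => hv.not_ge h.1
  have hint (s : ℝ) : IntervalIntegrable (fun ψ : ℝ => ψ ^ s) volume v b :=
    intervalIntegral.intervalIntegrable_rpow (Or.inr h0)
  rw [sub_mul_paretoPDF_eq_indicator hv, integral_indicator_Ici_of_mem_Icc ⟨hv.le, hvb⟩,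
    intervalIntegral.integral_const_mul,
    intervalIntegral.integral_sub ((hint _).const_mul b) (hint _),
    intervalIntegral.integral_const_mul,
    integral_rpow (Or.inr ⟨by contrapose! hα0; linarith, h0⟩),
    integral_rpow (Or.inr ⟨by contrapose! hα1; linarith, h0⟩),
    show -α - 1 + 1 = -α by ring, show -α + 1 = 1 - α by ring]
  have hvv_neg : v ^ α * v ^ (-α) = 1 := by rw [← rpow_add hv]; simp
  have hvv_sub : v ^ α * v ^ (1 - α) = v := by rw [← rpow_add hv]; simp
  have hbb : b * b ^ (-α) = b ^ (1 - α) := by rw [sub_eq_add_neg, rpow_add hb, rpow_one]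
  field_simp
  linear_combination (α - 1) ^ 2 * v ^ α * hbb + b * (1 - α) * (α - 1) * hvv_neg
    + α * (α - 1) * hvv_sub

theorem pareto_tail_rescale {α r c : ℝ} (hα : 1 < α) (hr : 0 < r) (hc : 0 < c) :
    ((α - 1) * r / α) ^ α * (c * r) ^ (1 - α) / (α - 1)
      = (α - 1) ^ (α - 1) * c * (α * c) ^ (-α) * r := by
  have hα0 : 0 < α := by linarith
  have hα1 : 0 < α - 1 := by linarith
  rw [show (α - 1) * r / α = (α - 1) / α * r by ring, mul_rpow (by positivity) hr.le,
    div_rpow hα1.le hα0.le, mul_rpow hc.le hr.le, mul_rpow hα0.le hc.le, rpow_sub hα1, rpow_one,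
    show (1 : ℝ) - α = 1 + -α by ring, rpow_add hc, rpow_add hr, rpow_one, rpow_one,
    rpow_neg hα0.le, rpow_neg hc.le, rpow_neg hr.le]
  field_simp

theorem stmt_10_general (α r g_e i_e : ℝ) (hα : 2 < α) (hr : 0 < r) :
    ∀ c_e : ℝ, (α - 1) / α ≤ c_e →
      Eexp (paretoPDF α ((α - 1) * r / α)) g_e i_e r c_e
        = (g_e + i_e * ((α - 1) ^ (α - 1) * c_e * (α * c_e) ^ (-α) + c_e - 1)) * r := by
  intro c hc
  have hα0 : 0 < α := by linarith
  have hα1 : 0 < α - 1 := by linarith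
  have hc0 : 0 < c := (div_pos hα1 hα0).trans_le hc
  have hvb : (α - 1) * r / α ≤ c * r := by
    rw [mul_div_right_comm]; exact mul_le_mul_of_nonneg_right hc hr.le
  have hmean : α * ((α - 1) * r / α) / (α - 1) = r := by field_simp
  rw [Eexp, integral_sub_mul_paretoPDF hα0.ne' (by linarith) (by positivity) hvb, hmean,
    pareto_tail_rescale (by linarith) hr hc0]
  ring

/-- (Proposition 2, expected energy) For the Pareto density with shape `α > 2` and scale
`v = (α − 1)·r/α` (mean `μ = r`), for every `c_e ≥ (α − 1)/α`,
`E_exp(c_e) = [g_e + i_e·((α − 1)^{α−1}·c_e·(α·c_e)^{−α} + c_e − 1)]·r`. -/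
theorem stmt_10 (α r g_e i_e : ℝ) (hα : 2 < α) (hr : 0 < r) (hg : 0 < g_e) (hi : 0 < i_e) :
    ∀ c_e : ℝ, (α - 1) / α ≤ c_e →
      Eexp (paretoPDF α ((α - 1) * r / α)) g_e i_e r c_e
        = (g_e + i_e * ((α - 1) ^ (α - 1) * c_e * (α * c_e) ^ (-α) + c_e - 1)) * r :=
  stmt_10_general α r g_e i_e hα hr
end

section
/- (Proposition 2, one-sided variation) Let α > 2, r > 0, and set v = (α − 1)·r/α. Let P be the Pareto probability density P(ψ) = α·v^α/ψ^{α+1} for ψ ≥ v and P(ψ) = 0 otherwise (so the mean is μ = r). Then for every c_e ≥ (α − 1)/α, the one-sided energy variation satisfies E_var(c_e) = 2·g_e²·(α − 1)^{α−1}·c_e^{2−α}·r² / (α^α·(α − 2)). -/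
open MeasureTheory Set

/-- (Proposition 2, one-sided variation) For the Pareto density with shape `α > 2` and
scale `v = (α − 1)·r/α` (mean `μ = r`), for every `c_e ≥ (α − 1)/α`,
`E_var(c_e) = 2·g_e²·(α − 1)^{α−1}·c_e^{2−α}·r² / (α^α·(α − 2))`. -/
theorem stmt_11 (α r g_e : ℝ) (hα : 2 < α) (hr : 0 < r) (hg : 0 < g_e) :
    ∀ c_e : ℝ, (α - 1) / α ≤ c_e →
      Evar (paretoPDF α ((α - 1) * r / α)) g_e r c_e
        = 2 * g_e ^ 2 * (α - 1) ^ (α - 1) * c_e ^ (2 - α) * r ^ 2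
            / (α ^ α * (α - 2)) := by
  intro c hc
  have hα0 : (0:ℝ) < α := by linarith
  have hα1 : (0:ℝ) < α - 1 := by linarith
  have hα2 : (0:ℝ) < α - 2 := by linarith
  set v : ℝ := (α - 1) * r / α with hv
  have hv0 : 0 < v := by positivity
  have hc0 : 0 < c := lt_of_lt_of_le (by positivity) hc
  set a : ℝ := c * r with ha'
  have ha0 : 0 < a := by positivity
  have hva : v ≤ a := by
    have h := (div_le_iff₀ hα0).mp hc
    rw [hv, ha', div_le_iff₀ hα0]
    nlinarith
  -- integrability of power functions
  have I1 : IntegrableOn (fun ψ : ℝ => ψ ^ (1 - α)) (Ioi a) :=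
    integrableOn_Ioi_rpow_of_lt (by linarith) ha0
  have I2 : IntegrableOn (fun ψ : ℝ => ψ ^ (-α)) (Ioi a) :=
    integrableOn_Ioi_rpow_of_lt (by linarith) ha0
  have I3 : IntegrableOn (fun ψ : ℝ => ψ ^ (-α - 1)) (Ioi a) :=
    integrableOn_Ioi_rpow_of_lt (by linarith) ha0
  -- rewrite the integrand on Ioi a
  have hcong : ∀ ψ ∈ Ioi a,
      (ψ - a) ^ 2 * paretoPDF α v ψ
        = α * v ^ α * ψ ^ (1 - α) - 2 * a * (α * v ^ α) * ψ ^ (-α)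
            + a ^ 2 * (α * v ^ α) * ψ ^ (-α - 1) := by
    intro ψ hψ
    have hψ0 : 0 < ψ := lt_trans ha0 hψ
    have hvψ : v ≤ ψ := le_of_lt (lt_of_le_of_lt hva hψ)
    have e1 : ψ ^ (1 - α) = ψ ^ (2:ℝ) * ψ ^ (-α - 1) := by
      rw [← Real.rpow_add hψ0]; ring_nf
    have e2 : ψ ^ (-α) = ψ * ψ ^ (-α - 1) := by
      nth_rewrite 2 [← Real.rpow_one ψ]
      rw [← Real.rpow_add hψ0]; ring_nf
    have e3 : ψ ^ (2:ℝ) = ψ ^ (2:ℕ) := by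
      rw [← Real.rpow_natCast]; norm_num
    have e4 : α * v ^ α / ψ ^ (α + 1) = α * v ^ α * ψ ^ (-α - 1) := by
      rw [div_eq_mul_inv, ← Real.rpow_neg hψ0.le, show (-(α + 1):ℝ) = -α - 1 by ring]
    simp only [paretoPDF, if_pos hvψ, e4, e1, e2, e3]
    ring
  have Isub : IntegrableOn
      (fun ψ : ℝ => α * v ^ α * ψ ^ (1 - α) - 2 * a * (α * v ^ α) * ψ ^ (-α)) (Ioi a) :=
    (I1.const_mul _).sub (I2.const_mul _)
  have hint : ∫ ψ in Ioi a, (ψ - a) ^ 2 * paretoPDF α v ψ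
      = α * v ^ α * (-a ^ (1 - α + 1) / (1 - α + 1))
        - 2 * a * (α * v ^ α) * (-a ^ (-α + 1) / (-α + 1))
        + a ^ 2 * (α * v ^ α) * (-a ^ (-α - 1 + 1) / (-α - 1 + 1)) := by
    rw [setIntegral_congr_fun measurableSet_Ioi hcong,
      integral_add Isub (I3.const_mul _),
      integral_sub (I1.const_mul _) (I2.const_mul _),
      integral_const_mul, integral_const_mul, integral_const_mul,
      integral_Ioi_rpow_of_lt (by linarith) ha0,
      integral_Ioi_rpow_of_lt (by linarith) ha0,
      integral_Ioi_rpow_of_lt (by linarith) ha0]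
  -- simplify powers of a
  have hB : a ^ (-α + 1) = a ^ (2 - α) / a := by
    rw [eq_div_iff ha0.ne']
    have h := (Real.rpow_add_one ha0.ne' (-α + 1)).symm
    rw [show (-α + 1 + 1:ℝ) = 2 - α by ring] at h
    exact h
  have hC : a ^ (-α) = a ^ (2 - α) / a ^ 2 := by
    rw [eq_div_iff (by positivity : (a:ℝ) ^ 2 ≠ 0)]
    have h2 : a ^ ((2:ℕ):ℝ) = a ^ (2:ℕ) := Real.rpow_natCast a 2
    have h := (Real.rpow_add ha0 (-α) ((2:ℕ):ℝ)).symm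
    rw [h2, show (-α + ((2:ℕ):ℝ):ℝ) = 2 - α by push_cast; ring] at h
    exact h
  have hsum : α * v ^ α * (-a ^ (1 - α + 1) / (1 - α + 1))
        - 2 * a * (α * v ^ α) * (-a ^ (-α + 1) / (-α + 1))
        + a ^ 2 * (α * v ^ α) * (-a ^ (-α - 1 + 1) / (-α - 1 + 1))
      = 2 * (v ^ α * a ^ (2 - α)) / ((α - 1) * (α - 2)) := by
    rw [show (1 - α + 1:ℝ) = 2 - α by ring, show (-α - 1 + 1:ℝ) = -α by ring, hB, hC]
    have h1 : (2 - α : ℝ) ≠ 0 := by linarith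
    have h2 : (-α + 1 : ℝ) ≠ 0 := by linarith
    have h3 : (α - 1 : ℝ) ≠ 0 := by linarith
    have h4 : (α - 2 : ℝ) ≠ 0 := by linarith
    field_simp
    ring
  -- algebraic identity for the coefficient
  have hsplit : (α - 1) ^ α = (α - 1) ^ (α - 1) * (α - 1) := by
    have h := (Real.rpow_add_one hα1.ne' (α - 1)).symm
    rw [show (α - 1 + 1:ℝ) = α by ring] at h
    exact h.symm
  have hkey : v ^ α * a ^ (2 - α)
      = (α - 1) ^ (α - 1) * (α - 1) * c ^ (2 - α) * r ^ 2 / α ^ α := by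
    have hv1 : v ^ α = (α - 1) ^ α * r ^ α / α ^ α := by
      rw [hv, Real.div_rpow (by positivity) hα0.le, Real.mul_rpow hα1.le hr.le]
    have ha1 : a ^ (2 - α) = c ^ (2 - α) * r ^ (2 - α) := by
      rw [ha', Real.mul_rpow hc0.le hr.le]
    have hrr : r ^ α * r ^ (2 - α) = r ^ (2:ℕ) := by
      rw [← Real.rpow_add hr, ← Real.rpow_natCast r 2]
      norm_num
    rw [hv1, ha1, hsplit, div_mul_eq_mul_div, ← hrr]
    ring
  have hαα : (0:ℝ) < α ^ α := Real.rpow_pos_of_pos hα0 α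
  show g_e ^ 2 * ∫ ψ in Ioi (c * r), (ψ - c * r) ^ 2 * paretoPDF α v ψ
      = 2 * g_e ^ 2 * (α - 1) ^ (α - 1) * c ^ (2 - α) * r ^ 2 / (α ^ α * (α - 2))
  rw [← ha', hint, hsum, hkey]
  field_simp
end

section
/- (Proposition 4, expected energy) Let r > 0 and let P be the Half-Gaussian probability density P(ψ) = (2/(π·r))·exp(−ψ²/(π·r²)) for ψ ≥ 0 and P(ψ) = 0 otherwise (so the mean is μ = r). Then for every c_e ≥ 0, the expected energy consumption satisfies E_exp(c_e) = (g_e + i_e·c_e·erf(c_e/√π) + i_e·(exp(−c_e²/π) − 1))·r, where erf(x) = (2/√π)·∫₀^x exp(−t²) dt. -/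
/-!
On `[0, ∞)` the half-Gaussian density is a Gaussian of scale `σ = √π·r`, so the partial
expectation `∫₀^x (x − ψ) P(ψ) dψ` splits into `x·∫₀^x P`, which is `x·erf(x/σ)` after the
substitution `t = ψ/σ`, minus the first moment `∫₀^x ψ P(ψ) dψ`, which has the explicit
antiderivative `−r·exp(−ψ²/σ²)`. Taking `x = c_e·r` gives `x/σ = c_e/√π` and `x²/σ² = c_e²/π`.
-/

open MeasureTheory Set Real

/-- The error function `erf(x) = (2/√π)·∫₀^x exp(−t²) dt`. -/
noncomputable def erf (x : ℝ) : ℝ :=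
  (2 / Real.sqrt π) * ∫ t in (0:ℝ)..x, Real.exp (-t ^ 2)

/-- The Half-Gaussian density with mean `r`:
`P(ψ) = (2/(π·r))·exp(−ψ²/(π·r²))` for `ψ ≥ 0`, `0` otherwise. -/
noncomputable def halfGaussianPDF (r : ℝ) : ℝ → ℝ :=
  fun ψ => if 0 ≤ ψ then (2 / (π * r)) * Real.exp (-ψ ^ 2 / (π * r ^ 2)) else 0

theorem integral_exp_neg_sq_div_sq {σ : ℝ} (hσ : σ ≠ 0) (x : ℝ) :
    ∫ ψ in (0:ℝ)..x, exp (-ψ ^ 2 / σ ^ 2) = σ * (√π / 2) * erf (x / σ) := by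
  have h := intervalIntegral.integral_comp_div (fun t => exp (-t ^ 2)) hσ (a := 0) (b := x)
  simp only [div_pow, zero_div, smul_eq_mul, ← neg_div] at h
  have hsqrt : √π ≠ 0 := by positivity
  rw [h, erf]
  field_simp

theorem integral_mul_exp_neg_sq_div_sq {σ : ℝ} (hσ : σ ≠ 0) (x : ℝ) :
    ∫ ψ in (0:ℝ)..x, ψ * exp (-ψ ^ 2 / σ ^ 2) = σ ^ 2 / 2 * (1 - exp (-x ^ 2 / σ ^ 2)) := by
  have hderiv (ψ : ℝ) :
      HasDerivAt (fun ψ => -(σ ^ 2 / 2) * exp (-ψ ^ 2 / σ ^ 2)) (ψ * exp (-ψ ^ 2 / σ ^ 2)) ψ := by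
    have hexponent : HasDerivAt (fun ψ => -ψ ^ 2 / σ ^ 2) (-(2 * ψ) / σ ^ 2) ψ := by
      simpa using (hasDerivAt_pow 2 ψ).neg.div_const (σ ^ 2)
    refine (hexponent.exp.const_mul (-(σ ^ 2 / 2))).congr_deriv ?_
    field_simp
  rw [intervalIntegral.integral_eq_sub_of_hasDerivAt (fun ψ _ => hderiv ψ)
    ((by fun_prop : Continuous fun ψ => ψ * exp (-ψ ^ 2 / σ ^ 2)).intervalIntegrable _ _)]
  rw [zero_pow two_ne_zero, neg_zero, zero_div, exp_zero]
  ring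

theorem integral_sub_mul_exp_neg_sq_div_sq {σ : ℝ} (hσ : σ ≠ 0) (x : ℝ) :
    ∫ ψ in (0:ℝ)..x, (x - ψ) * exp (-ψ ^ 2 / σ ^ 2)
      = x * σ * (√π / 2) * erf (x / σ) - σ ^ 2 / 2 * (1 - exp (-x ^ 2 / σ ^ 2)) := by
  simp only [sub_mul]
  rw [intervalIntegral.integral_sub
      ((by fun_prop : Continuous fun ψ => x * exp (-ψ ^ 2 / σ ^ 2)).intervalIntegrable _ _)
      ((by fun_prop : Continuous fun ψ => ψ * exp (-ψ ^ 2 / σ ^ 2)).intervalIntegrable _ _),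
    intervalIntegral.integral_const_mul,
    integral_exp_neg_sq_div_sq hσ, integral_mul_exp_neg_sq_div_sq hσ]
  ring

theorem halfGaussianPDF_of_nonneg (r : ℝ) {ψ : ℝ} (hψ : 0 ≤ ψ) :
    halfGaussianPDF r ψ = 2 / (π * r) * exp (-ψ ^ 2 / (√π * r) ^ 2) := by
  rw [halfGaussianPDF, if_pos hψ, mul_pow, sq_sqrt pi_pos.le]

theorem integral_sub_mul_halfGaussianPDF {r x : ℝ} (hr : r ≠ 0) (hx : 0 ≤ x) :
    ∫ ψ in (0:ℝ)..x, (x - ψ) * halfGaussianPDF r ψ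
      = x * erf (x / (√π * r)) - r * (1 - exp (-x ^ 2 / (π * r ^ 2))) := by
  have hσ : √π * r ≠ 0 := mul_ne_zero (by positivity) hr
  have hcongr : ∫ ψ in (0:ℝ)..x, (x - ψ) * halfGaussianPDF r ψ
      = ∫ ψ in (0:ℝ)..x, 2 / (π * r) * ((x - ψ) * exp (-ψ ^ 2 / (√π * r) ^ 2)) := by
    refine intervalIntegral.integral_congr fun ψ hψ => ?_
    rw [uIcc_of_le hx] at hψ
    simp only [halfGaussianPDF_of_nonneg r hψ.1]
    ring
  rw [hcongr, intervalIntegral.integral_const_mul, integral_sub_mul_exp_neg_sq_div_sq hσ,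
    mul_pow, sq_sqrt pi_pos.le]
  generalize erf (x / (√π * r)) = e
  field_simp
  rw [sq_sqrt pi_pos.le]
  ring

theorem stmt_16_general (r g_e i_e : ℝ) (hr : 0 < r) :
    ∀ c_e : ℝ, 0 ≤ c_e →
      Eexp (halfGaussianPDF r) g_e i_e r c_e
        = (g_e + i_e * c_e * erf (c_e / Real.sqrt π)
            + i_e * (Real.exp (-c_e ^ 2 / π) - 1)) * r := by
  intro c hc
  have hscale : c * r / (√π * r) = c / √π := mul_div_mul_right c √π hr.ne'
  have hexponent : -(c * r) ^ 2 / (π * r ^ 2) = -c ^ 2 / π := by field_simp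
  rw [Eexp, integral_sub_mul_halfGaussianPDF hr.ne' (mul_nonneg hc hr.le), hscale, hexponent]
  ring

/-- (Proposition 4, expected energy) For the Half-Gaussian density with mean `μ = r`, for
every `c_e ≥ 0`,
`E_exp(c_e) = (g_e + i_e·c_e·erf(c_e/√π) + i_e·(exp(−c_e²/π) − 1))·r`. -/
theorem stmt_16 (r g_e i_e : ℝ) (hr : 0 < r) (hg : 0 < g_e) (hi : 0 < i_e) :
    ∀ c_e : ℝ, 0 ≤ c_e →
      Eexp (halfGaussianPDF r) g_e i_e r c_e
        = (g_e + i_e * c_e * erf (c_e / Real.sqrt π)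
            + i_e * (Real.exp (-c_e ^ 2 / π) - 1)) * r :=
  stmt_16_general r g_e i_e hr
end

section
/- (Proposition 6) Let R > 0 and let P be the exponential probability density P(ψ) = (1/R)·exp(−ψ/R) for ψ ≥ 0 (so the mean is μ_b = R). Then for every c_b ≥ 0, the expected billing cost satisfies B_exp(c_b) = (g_b − i_b)·R + i_b·c_b + (i_b + p_b)·R·exp(−c_b/R); the unique global minimizer of B_exp over [0, ∞) is c_b* = R·ln((i_b + p_b)/i_b); and the minimum value is B_exp(c_b*) = (g_b + i_b·ln((i_b + p_b)/i_b))·R. -/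
/-! The antiderivative `(t + R − c)·e^{−t/R}` of `(c − t)·e^{−t/R}/R` evaluates the integral, so
the cost is `(g_b − i_b)·R` plus the trade-off `a·c + b·R·e^{−c/R}` with `a = i_b`, `b = i_b + p_b`.
For `L = log (b/a)` we have `b·e^{−c/R} = a·e^{L − c/R}`, and the strict inequality `e^t > 1 + t`
for `t ≠ 0` shows that `c* = R·L` is the strict global minimizer of the trade-off. -/

open MeasureTheory Set

/-- Expected billing cost
`B_exp(c) = μ_b·(g_b + p_b) − p_b·c + (i_b + p_b)·∫₀^c (c − ψ) P(ψ) dψ`. -/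
noncomputable def Bexp (P : ℝ → ℝ) (g_b i_b p_b μb c : ℝ) : ℝ :=
  μb * (g_b + p_b) - p_b * c + (i_b + p_b) * ∫ ψ in (0:ℝ)..c, (c - ψ) * P ψ

open Real

lemma integral_sub_mul_exponential_density {R : ℝ} (hR : R ≠ 0) (c : ℝ) :
    ∫ ψ in (0:ℝ)..c, (c - ψ) * ((1 / R) * exp (-ψ / R)) = c - R + R * exp (-c / R) := by
  have hderiv : ∀ ψ ∈ uIcc (0:ℝ) c,
      HasDerivAt (fun t => (t + R - c) * exp (-t / R)) ((c - ψ) * ((1 / R) * exp (-ψ / R))) ψ := by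
    intro ψ _
    have hlin : HasDerivAt (fun t : ℝ => t + R - c) 1 ψ :=
      ((hasDerivAt_id' ψ).add_const R).sub_const c
    have hexp : HasDerivAt (fun t : ℝ => exp (-t / R)) (exp (-ψ / R) * (-1 / R)) ψ :=
      ((hasDerivAt_id' ψ).neg.div_const R).exp
    refine (hlin.fun_mul hexp).congr_deriv ?_
    field_simp
    ring
  have hint : IntervalIntegrable (fun ψ => (c - ψ) * ((1 / R) * exp (-ψ / R))) volume 0 c :=
    (by fun_prop : Continuous _).intervalIntegrable 0 c
  rw [intervalIntegral.integral_eq_sub_of_hasDerivAt hderiv hint]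
  simp only [zero_add, neg_zero, zero_div, exp_zero, mul_one]
  ring

lemma Bexp_exponential_density (g_b i_b p_b : ℝ) {R : ℝ} (hR : R ≠ 0) (c : ℝ) :
    Bexp (fun ψ => (1 / R) * exp (-ψ / R)) g_b i_b p_b R c
      = (g_b - i_b) * R + i_b * c + (i_b + p_b) * R * exp (-c / R) := by
  rw [Bexp, integral_sub_mul_exponential_density hR]
  ring

lemma mul_add_mul_exp_neg_div_at_log {a b R : ℝ} (ha : 0 < a) (hb : 0 < b) (hR : 0 < R) :
    a * (R * log (b / a)) + b * R * exp (-(R * log (b / a)) / R)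
      = a * R * log (b / a) + a * R := by
  have hexp : exp (-(R * log (b / a)) / R) = a / b := by
    rw [neg_div, mul_div_cancel_left₀ _ hR.ne', exp_neg, exp_log (by positivity), inv_div]
  rw [hexp]
  field_simp

lemma mul_add_mul_exp_neg_div_at_log_lt {a b R : ℝ} (ha : 0 < a) (hb : 0 < b) (hR : 0 < R)
    (c : ℝ) (hc : c ≠ R * log (b / a)) :
    a * R * log (b / a) + a * R < a * c + b * R * exp (-c / R) := by
  set t := log (b / a) + -c / R
  have ht : t ≠ 0 := by
    intro h
    have hcR : c / R = log (b / a) := by simp only [t, neg_div] at h; linarith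
    rw [← hcR, mul_div_cancel₀ _ hR.ne'] at hc
    exact hc rfl
  have hshift : b * exp (-c / R) = a * exp t := by
    rw [exp_add, exp_log (by positivity)]
    field_simp
  calc a * R * log (b / a) + a * R = a * c + a * R * (t + 1) := by
        simp only [t]; field_simp; ring
    _ < a * c + a * R * exp t := by
        gcongr
        exact add_one_lt_exp ht
    _ = a * c + b * R * exp (-c / R) := by rw [mul_right_comm b, hshift]; ring

theorem stmt_19_general (R g_b i_b p_b : ℝ) (hR : 0 < R)
    (hib : 0 < i_b) (hpb : 0 < p_b) :
    (∀ c_b : ℝ, 0 ≤ c_b →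
      Bexp (fun ψ => (1 / R) * Real.exp (-ψ / R)) g_b i_b p_b R c_b
        = (g_b - i_b) * R + i_b * c_b + (i_b + p_b) * R * Real.exp (-c_b / R)) ∧
    (0 ≤ R * Real.log ((i_b + p_b) / i_b) ∧
      ∀ c_b : ℝ, 0 ≤ c_b → c_b ≠ R * Real.log ((i_b + p_b) / i_b) →
        Bexp (fun ψ => (1 / R) * Real.exp (-ψ / R)) g_b i_b p_b R
            (R * Real.log ((i_b + p_b) / i_b))
          < Bexp (fun ψ => (1 / R) * Real.exp (-ψ / R)) g_b i_b p_b R c_b) ∧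
    Bexp (fun ψ => (1 / R) * Real.exp (-ψ / R)) g_b i_b p_b R
        (R * Real.log ((i_b + p_b) / i_b))
      = (g_b + i_b * Real.log ((i_b + p_b) / i_b)) * R := by
  have hformula := Bexp_exponential_density g_b i_b p_b hR.ne'
  have hsum : 0 < i_b + p_b := by linarith
  have hmin := mul_add_mul_exp_neg_div_at_log hib hsum hR
  have hlog : 0 ≤ log ((i_b + p_b) / i_b) :=
    log_nonneg ((one_le_div hib).mpr (by linarith))
  refine ⟨fun c _ => hformula c, ⟨mul_nonneg hR.le hlog, fun c _ hc => ?_⟩, ?_⟩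
  · rw [hformula, hformula]
    linarith [mul_add_mul_exp_neg_div_at_log_lt hib hsum hR c hc]
  · rw [hformula]
    linear_combination hmin

/-- (Proposition 6) For the exponential density `P(ψ) = (1/R)·exp(−ψ/R)` on `[0,∞)`
(mean `μ_b = R`): for every `c_b ≥ 0`,
`B_exp(c_b) = (g_b − i_b)·R + i_b·c_b + (i_b + p_b)·R·exp(−c_b/R)`; the unique global
minimizer of `B_exp` over `[0, ∞)` is `c_b* = R·ln((i_b + p_b)/i_b)`; and
`B_exp(c_b*) = (g_b + i_b·ln((i_b + p_b)/i_b))·R`. -/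
theorem stmt_19 (R g_b i_b p_b : ℝ) (hR : 0 < R)
    (hgb : 0 < g_b) (hib : 0 < i_b) (hpb : 0 < p_b) :
    (∀ c_b : ℝ, 0 ≤ c_b →
      Bexp (fun ψ => (1 / R) * Real.exp (-ψ / R)) g_b i_b p_b R c_b
        = (g_b - i_b) * R + i_b * c_b + (i_b + p_b) * R * Real.exp (-c_b / R)) ∧
    (0 ≤ R * Real.log ((i_b + p_b) / i_b) ∧
      ∀ c_b : ℝ, 0 ≤ c_b → c_b ≠ R * Real.log ((i_b + p_b) / i_b) →
        Bexp (fun ψ => (1 / R) * Real.exp (-ψ / R)) g_b i_b p_b R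
            (R * Real.log ((i_b + p_b) / i_b))
          < Bexp (fun ψ => (1 / R) * Real.exp (-ψ / R)) g_b i_b p_b R c_b) ∧
    Bexp (fun ψ => (1 / R) * Real.exp (-ψ / R)) g_b i_b p_b R
        (R * Real.log ((i_b + p_b) / i_b))
      = (g_b + i_b * Real.log ((i_b + p_b) / i_b)) * R :=
  stmt_19_general R g_b i_b p_b hR hib hpb
end
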